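/- Let X ∈ 𝓢^q be closed, exact and irreducible. Then X = Δ^{p^i} Y (up to equivalence) for some integer i ≥ 0 and some transitive set Y ∈ 𝓢^q. -/

import Mathlib

open Equiv Pointwise

namespace FPS

/-- The support of a permutation of `ℕ`. -/
def psupp (ρ : Equiv.Perm ℕ) : Set ℕ := {ω | ρ ω ≠ ω}

/-- The support of a set of permutations of `ℕ`. -/
def ssupp (X : Set (Equiv.Perm ℕ)) : Set ℕ := ⋃ ρ ∈ X, psupp ρ

/-- `Sym(α)`: the subgroup of permutations of `ℕ` supported on the subset `α`. -/
def symOn (α : Set ℕ) : Subgroup (Equiv.Perm ℕ) where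
  carrier := {g | ∀ ω, ω ∉ α → g ω = ω}
  one_mem' := fun _ _ => rfl
  mul_mem' := by
    intro a b ha hb ω hω
    have hbω := hb ω hω
    have haω := ha ω hω
    show a (b ω) = ω
    rw [hbω, haω]
  inv_mem' := by
    intro a ha ω hω
    have haω := ha ω hω
    show a⁻¹ ω = ω
    nth_rewrite 1 [← haω]
    simp

/-- Membership in the family `𝓕`: finite nonempty sets of finitary permutations,
different from `{1}`. -/
def memF (X : Set (Equiv.Perm ℕ)) : Prop :=
  X.Finite ∧ X.Nonempty ∧ X ≠ {1} ∧ ∀ ρ ∈ X, (psupp ρ).Finite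

/-- Membership in `𝓢^q`: members of `𝓕` all of whose elements are products of `q`-cycles
(each orbit on the support has size `q`) with full support. -/
def memS (q : ℕ) (X : Set (Equiv.Perm ℕ)) : Prop :=
  memF X ∧ (∀ ρ ∈ X, psupp ρ = ssupp X) ∧
    ∀ ρ ∈ X, ∀ ω ∈ psupp ρ, (Set.range fun n : ℤ => (ρ ^ n) ω).ncard = q

/-- Right conjugation `x ↦ x^g = g⁻¹ x g`. -/
def conjR (g x : Equiv.Perm ℕ) : Equiv.Perm ℕ := g⁻¹ * x * g

/-- Conjugate of a set of permutations: `X^g`. -/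
def conjSet (g : Equiv.Perm ℕ) (X : Set (Equiv.Perm ℕ)) : Set (Equiv.Perm ℕ) := conjR g '' X

/-- The setwise stabilizer (under conjugation) of a set of permutations,
as a subgroup of the full group `Sym(ℕ)`. -/
def setStab (X : Set (Equiv.Perm ℕ)) : Subgroup (Equiv.Perm ℕ) where
  carrier := {g | ∀ x, x ∈ X ↔ g⁻¹ * x * g ∈ X}
  one_mem' := by
    intro x
    simp
  mul_mem' := by
    intro a b ha hb x
    have h1 := ha x
    have h2 := hb (a⁻¹ * x * a)
    have e : b⁻¹ * (a⁻¹ * x * a) * b = (a * b)⁻¹ * x * (a * b) := by group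
    rw [e] at h2
    exact h1.trans h2
  inv_mem' := by
    intro a ha x
    have h := ha (a * x * a⁻¹)
    have e : a⁻¹ * (a * x * a⁻¹) * a = x := by group
    rw [e] at h
    have e2 : a * x * a⁻¹ = a⁻¹⁻¹ * x * a⁻¹ := by group
    rw [e2] at h
    exact h.symm

/-- `N_X`: the stabilizer of `X` in `G_X = Sym(supp X)`. -/
def NX (X : Set (Equiv.Perm ℕ)) : Subgroup (Equiv.Perm ℕ) := symOn (ssupp X) ⊓ setStab X

/-- `S_X = C_{G_X}(X)`: the pointwise centralizer of `X` in `G_X = Sym(supp X)`. -/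
def SX (X : Set (Equiv.Perm ℕ)) : Subgroup (Equiv.Perm ℕ) :=
  symOn (ssupp X) ⊓ Subgroup.centralizer X

/-- `Q` is a Sylow `p`-subgroup of the subgroup `H` (that is, a maximal `p`-subgroup of `H`). -/
def IsSylowOf {G : Type*} [Group G] (p : ℕ) (Q H : Subgroup G) : Prop :=
  Q ≤ H ∧ IsPGroup p Q ∧ ∀ R : Subgroup G, R ≤ H → IsPGroup p R → Q ≤ R → R = Q

/-- `Ξ_X = ⋃_{g ∈ G_X} X^g`. -/
def Xi (X : Set (Equiv.Perm ℕ)) : Set (Equiv.Perm ℕ) :=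
  ⋃ g ∈ (symOn (ssupp X) : Set (Equiv.Perm ℕ)), conjSet g X

/-- `X` is closed: `C_{G_X}(Q_X) ∩ Ξ_X = X` for (any) Sylow `p`-subgroup `Q_X` of `S_X`. -/
def IsClosedSet (p : ℕ) (X : Set (Equiv.Perm ℕ)) : Prop :=
  ∀ Q : Subgroup (Equiv.Perm ℕ), IsSylowOf p Q (SX X) →
    (Subgroup.centralizer (Q : Set (Equiv.Perm ℕ)) : Set (Equiv.Perm ℕ)) ∩ Xi X = X

/-- `X` is exact: `supp Q_X = supp X` for (any) Sylow `p`-subgroup `Q_X` of `S_X`. -/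
def IsExactSet (p : ℕ) (X : Set (Equiv.Perm ℕ)) : Prop :=
  ∀ Q : Subgroup (Equiv.Perm ℕ), IsSylowOf p Q (SX X) →
    ssupp (Q : Set (Equiv.Perm ℕ)) = ssupp X

/-- `X` is projective: `Q_X = 1`. -/
def IsProjectiveSet (p : ℕ) (X : Set (Equiv.Perm ℕ)) : Prop :=
  ∀ Q : Subgroup (Equiv.Perm ℕ), IsSylowOf p Q (SX X) → Q = ⊥

/-- `X ∈ 𝓕` is irreducible if it is not a product of two members of `𝓕`
with disjoint supports. -/
def IsIrred (X : Set (Equiv.Perm ℕ)) : Prop :=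
  memF X ∧ ∀ Y Z : Set (Equiv.Perm ℕ), memF Y → memF Z →
    Disjoint (ssupp Y) (ssupp Z) → X ≠ Y * Z

/-- Two sets of permutations are equivalent if they are conjugate in `Sym(ℕ)`. -/
def EquivSet (X Y : Set (Equiv.Perm ℕ)) : Prop := ∃ g : Equiv.Perm ℕ, conjSet g X = Y

/-- `D` is a realization of `Δ^s X`: the diagonal of a product of `s` disjointly
supported conjugates of `X`. -/
def IsDelta (s : ℕ) (X D : Set (Equiv.Perm ℕ)) : Prop :=
  ∃ g : Fin s → Equiv.Perm ℕ,
    (∀ i j, i ≠ j → Disjoint (ssupp (conjSet (g i) X)) (ssupp (conjSet (g j) X))) ∧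
    D = (fun x => (List.ofFn fun i => conjR (g i) x).prod) '' X

/-- `D` is a realization of the `a`-fold `*`-power `X^a`: a product of `a` disjointly
supported conjugates of `X`. -/
def IsStarPow (a : ℕ) (X D : Set (Equiv.Perm ℕ)) : Prop :=
  ∃ g : Fin a → Equiv.Perm ℕ,
    (∀ i j, i ≠ j → Disjoint (ssupp (conjSet (g i) X)) (ssupp (conjSet (g j) X))) ∧
    D = (List.ofFn fun i => conjSet (g i) X).prod

/-- `X` is a transitive set: `⟨X⟩` is transitive on `supp X`. -/
def TransitiveSet (X : Set (Equiv.Perm ℕ)) : Prop :=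
  ∀ a ∈ ssupp X, ∀ b ∈ ssupp X, ∃ g ∈ Subgroup.closure X, g a = b

lemma mem_setStab {X : Set (Equiv.Perm ℕ)} {g : Equiv.Perm ℕ} :
    g ∈ setStab X ↔ ∀ x, x ∈ X ↔ g⁻¹ * x * g ∈ X := Iff.rfl

lemma conjR_mem {X : Set (Equiv.Perm ℕ)} {g : Equiv.Perm ℕ} (hg : g ∈ setStab X)
    {x : Equiv.Perm ℕ} (hx : x ∈ X) : g⁻¹ * x * g ∈ X :=
  (mem_setStab.mp hg x).mp hx

lemma conjL_mem {X : Set (Equiv.Perm ℕ)} {g : Equiv.Perm ℕ} (hg : g ∈ setStab X)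
    {x : Equiv.Perm ℕ} (hx : x ∈ X) : g * x * g⁻¹ ∈ X := by
  have h := mem_setStab.mp ((setStab X).inv_mem hg) x
  rw [inv_inv] at h
  exact h.mp hx

/-- The permutation of `X` induced by conjugation by an element of `N_X`. -/
def conjPerm (X : Set (Equiv.Perm ℕ)) (g : NX X) : Equiv.Perm X where
  toFun x := ⟨(g : Equiv.Perm ℕ) * x * (g : Equiv.Perm ℕ)⁻¹,
    conjL_mem (Subgroup.mem_inf.mp g.2).2 x.2⟩
  invFun x := ⟨(g : Equiv.Perm ℕ)⁻¹ * x * (g : Equiv.Perm ℕ),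
    conjR_mem (Subgroup.mem_inf.mp g.2).2 x.2⟩
  left_inv x := by
    apply Subtype.ext
    show (g : Equiv.Perm ℕ)⁻¹ * ((g : Equiv.Perm ℕ) * x * (g : Equiv.Perm ℕ)⁻¹) *
      (g : Equiv.Perm ℕ) = x
    group
  right_inv x := by
    apply Subtype.ext
    show (g : Equiv.Perm ℕ) * ((g : Equiv.Perm ℕ)⁻¹ * x * (g : Equiv.Perm ℕ)) *
      (g : Equiv.Perm ℕ)⁻¹ = x
    group

/-- The action of `N_X` on `X` by conjugation, as a homomorphism `N_X →* Sym(X)`. -/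
def MXhom (X : Set (Equiv.Perm ℕ)) : NX X →* Equiv.Perm X where
  toFun := conjPerm X
  map_one' := by
    apply Equiv.ext
    intro x
    apply Subtype.ext
    show ((1 : NX X) : Equiv.Perm ℕ) * x * ((1 : NX X) : Equiv.Perm ℕ)⁻¹ = x
    simp
  map_mul' a b := by
    apply Equiv.ext
    intro x
    apply Subtype.ext
    show ((a * b : NX X) : Equiv.Perm ℕ) * x * ((a * b : NX X) : Equiv.Perm ℕ)⁻¹
      = (a : Equiv.Perm ℕ) * ((b : Equiv.Perm ℕ) * x * (b : Equiv.Perm ℕ)⁻¹) *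
        (a : Equiv.Perm ℕ)⁻¹
    push_cast
    group

/-- `M_X = N_X/S_X`, realized as the image of `N_X` in `Sym(X)` (the action of `N_X`
on `X` is by conjugation, with kernel `S_X`). -/
def MX (X : Set (Equiv.Perm ℕ)) : Subgroup (Equiv.Perm X) := (MXhom X).range

/-- The permutation module `k[Ω]` of the `G`-set `Ω` has a nonzero projective direct summand. -/
def HasProjSummand (k : Type) [Field k] (G : Type*) [Group G] (Ω : Type*) [MulAction G Ω] :
    Prop :=
  ∃ P W : Submodule (MonoidAlgebra k G) (Representation.ofMulAction k G Ω).asModule,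
    IsCompl P W ∧ P ≠ ⊥ ∧ Module.Projective (MonoidAlgebra k G) P

/-- `X` is a fixed point set: `X ∈ 𝓢^q`, `X` is closed, and the permutation
`k M_X`-module `k[X]` has a nonzero projective direct summand. -/
def IsFPS (p q : ℕ) (k : Type) [Field k] (X : Set (Equiv.Perm ℕ)) : Prop :=
  memS q X ∧ IsClosedSet p X ∧ HasProjSummand k (MX X) X

/-- `X` and `Y` (with disjoint supports) are coprime: `N_{X*Y} = N_X × N_Y`. -/
def CoprimeSets (X Y : Set (Equiv.Perm ℕ)) : Prop := NX (X * Y) = NX X ⊔ NX Y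

/-- `X` is projective-free: no factor in a decomposition of `X` into irreducibles
is projective. -/
def ProjFree (p : ℕ) (X : Set (Equiv.Perm ℕ)) : Prop :=
  ∀ L : List (Set (Equiv.Perm ℕ)), (∀ Y ∈ L, IsIrred Y) →
    L.Pairwise (fun A B => Disjoint (ssupp A) (ssupp B)) →
    X = L.prod → ∀ Y ∈ L, ¬ IsProjectiveSet p Y


/-! ### Auxiliary lemmas -/

theorem _root_.Equiv.Perm.inv_apply_self {α : Type*} (f : Perm α) (x : α) : f⁻¹ (f x) = x :=
  Equiv.symm_apply_apply f x

theorem _root_.Equiv.Perm.apply_inv_self {α : Type*} (f : Perm α) (x : α) : f (f⁻¹ x) = x :=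
  Equiv.apply_symm_apply f x

section Aux

lemma mem_psupp {x : Perm ℕ} {ω : ℕ} : ω ∈ psupp x ↔ x ω ≠ ω := Iff.rfl

lemma psupp_empty_iff {x : Perm ℕ} : psupp x = ∅ ↔ x = 1 := by
  constructor
  · intro h
    ext ω
    by_contra hω
    exact absurd h (Set.nonempty_iff_ne_empty.mp ⟨ω, hω⟩)
  · rintro rfl
    ext ω
    simp [psupp]

lemma mem_symOn {α : Set ℕ} {g : Perm ℕ} : g ∈ symOn α ↔ ∀ ω ∉ α, g ω = ω := Iff.rfl

lemma symOn_maps {α : Set ℕ} {g : Perm ℕ} (hg : g ∈ symOn α) {ω : ℕ} (hω : ω ∈ α) :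
    g ω ∈ α := by
  by_contra h
  have h2 : g (g ω) = g ω := hg _ h
  have := g.injective h2
  rw [this] at h
  exact h hω

lemma symOn_finite {α : Set ℕ} (hα : α.Finite) : Finite (symOn α : Set (Perm ℕ)) := by
  haveI := hα.to_subtype
  refine Finite.of_injective
    (fun g : (symOn α : Set (Perm ℕ)) => fun ω : α => (⟨(g : Perm ℕ) ω, symOn_maps g.2 ω.2⟩ : α))
    ?_
  intro g g' h
  apply Subtype.ext
  apply Equiv.ext
  intro ω
  by_cases hω : ω ∈ α
  · have := congrFun h ⟨ω, hω⟩
    exact Subtype.ext_iff.mp this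
  · rw [g.2 ω hω, g'.2 ω hω]

lemma prod_fix {ω : ℕ} : ∀ {l : List (Perm ℕ)}, (∀ f ∈ l, f ω = ω) → l.prod ω = ω := by
  intro l
  induction l with
  | nil => intro _; rfl
  | cons f l ih =>
    intro h
    rw [List.prod_cons]
    have h1 : l.prod ω = ω := ih fun g hg => h g (List.mem_cons_of_mem f hg)
    show f (l.prod ω) = ω
    rw [h1, h f List.mem_cons_self]

lemma psupp_conjR {g x : Perm ℕ} : psupp (conjR g x) = {ω | g ω ∈ psupp x} := by
  ext ω
  simp only [psupp, conjR, Set.mem_setOf_eq]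
  show g⁻¹ (x (g ω)) ≠ ω ↔ x (g ω) ≠ g ω
  constructor
  · intro h h2
    exact h (by rw [h2]; exact Equiv.Perm.inv_apply_self g ω)
  · intro h h2
    apply h
    have := congrArg g h2
    rwa [Equiv.Perm.apply_inv_self] at this

lemma ssupp_conjSet {g : Perm ℕ} {X : Set (Perm ℕ)} :
    ssupp (conjSet g X) = {ω | g ω ∈ ssupp X} := by
  ext ω
  simp only [ssupp, conjSet, Set.mem_iUnion, Set.mem_setOf_eq]
  constructor
  · rintro ⟨ρ, ⟨⟨x, hx, rfl⟩, hω⟩⟩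
    rw [psupp_conjR] at hω
    exact ⟨x, ⟨hx, hω⟩⟩
  · rintro ⟨x, hx, hω⟩
    exact ⟨conjR g x, ⟨⟨x, hx, rfl⟩, by rw [psupp_conjR]; exact hω⟩⟩

/-- Invariance of a set under a permutation. -/
def Inv2 (S : Set ℕ) (x : Perm ℕ) : Prop := ∀ ω, ω ∈ S ↔ x ω ∈ S

open Classical in
/-- The restriction of a permutation to an invariant set, extended by the identity. -/
noncomputable def restr (S : Set ℕ) (x : Perm ℕ) : Perm ℕ :=
  if h : Inv2 S x then Equiv.Perm.ofSubtype (x.subtypePerm (fun ω => (h ω).symm)) else 1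

lemma restr_apply_of_mem {S : Set ℕ} {x : Perm ℕ} (h : Inv2 S x) {ω : ℕ} (hω : ω ∈ S) :
    restr S x ω = x ω := by
  classical
  rw [restr, dif_pos h, Equiv.Perm.ofSubtype_apply_of_mem _ hω, Equiv.Perm.subtypePerm_apply]

lemma restr_apply_of_not_mem {S : Set ℕ} {x : Perm ℕ} {ω : ℕ} (hω : ω ∉ S) :
    restr S x ω = ω := by
  classical
  rw [restr]
  split_ifs with h
  · exact Equiv.Perm.ofSubtype_apply_of_not_mem _ hω
  · rfl

lemma restr_mem_symOn {S : Set ℕ} {x : Perm ℕ} : restr S x ∈ symOn S :=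
  fun _ hω => restr_apply_of_not_mem hω

lemma psupp_restr {S : Set ℕ} {x : Perm ℕ} (h : Inv2 S x) (hS : ∀ ω ∈ S, x ω ≠ ω) :
    psupp (restr S x) = S := by
  ext ω
  by_cases hω : ω ∈ S
  · simp only [mem_psupp, restr_apply_of_mem h hω]
    exact iff_of_true (hS ω hω) hω
  · simp only [mem_psupp, restr_apply_of_not_mem hω]
    exact iff_of_false (by simp) hω

lemma Inv2.pow {S : Set ℕ} {x : Perm ℕ} (h : Inv2 S x) (n : ℕ) : Inv2 S (x ^ n) := by
  induction n with
  | zero => intro ω; simp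
  | succ n ih =>
    intro ω
    rw [pow_succ]
    exact (h ω).trans (ih (x ω))

lemma Inv2.inv {S : Set ℕ} {x : Perm ℕ} (h : Inv2 S x) : Inv2 S x⁻¹ := by
  intro ω
  have := h (x⁻¹ ω)
  rw [Equiv.Perm.apply_inv_self] at this
  exact this.symm

lemma Inv2.zpow {S : Set ℕ} {x : Perm ℕ} (h : Inv2 S x) (n : ℤ) : Inv2 S (x ^ n) := by
  cases n with
  | ofNat n => rw [Int.ofNat_eq_coe, zpow_natCast]; exact h.pow n
  | negSucc n => rw [zpow_negSucc]; exact (h.pow (n + 1)).inv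

lemma restr_pow_apply {S : Set ℕ} {x : Perm ℕ} (h : Inv2 S x) (n : ℕ) :
    ∀ ω ∈ S, ((restr S x) ^ n) ω = (x ^ n) ω := by
  induction n with
  | zero => intro ω _; simp
  | succ n ih =>
    intro ω hω
    rw [pow_succ, pow_succ]
    show ((restr S x) ^ n) (restr S x ω) = (x ^ n) (x ω)
    rw [restr_apply_of_mem h hω]
    exact ih (x ω) ((h ω).mp hω)

lemma restr_zpow_apply {S : Set ℕ} {x : Perm ℕ} (h : Inv2 S x) {ω : ℕ} (hω : ω ∈ S)
    (n : ℤ) : ((restr S x) ^ n) ω = (x ^ n) ω := by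
  cases n with
  | ofNat n =>
    rw [Int.ofNat_eq_coe, zpow_natCast, zpow_natCast]
    exact restr_pow_apply h n ω hω
  | negSucc n =>
    rw [zpow_negSucc, zpow_negSucc]
    set ω' := ((x ^ (n + 1))⁻¹ : Perm ℕ) ω with hω'
    have hω'S : ω' ∈ S := (h.pow (n + 1)).inv ω |>.mp hω
    have h1 : ((restr S x) ^ (n + 1)) ω' = ω := by
      rw [restr_pow_apply h (n + 1) ω' hω'S, hω', Equiv.Perm.apply_inv_self]
    have := congrArg (((restr S x) ^ (n + 1))⁻¹ : Perm ℕ) h1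
    rw [Equiv.Perm.inv_apply_self] at this
    exact this.symm

lemma cycleType_rep {α : Type} [Fintype α] [DecidableEq α] {f : Perm α} {q : ℕ}
    (hmove : ∀ a, f a ≠ a)
    (horb : ∀ a, (Set.range fun n : ℤ => (f ^ n) a).ncard = q) :
    ∃ k, f.cycleType = Multiset.replicate k q ∧ k * q = Fintype.card α := by
  have hent : ∀ b ∈ f.cycleType, b = q := by
    intro b hb
    rw [Equiv.Perm.cycleType_def, Multiset.mem_map] at hb
    obtain ⟨c, hc, rfl⟩ := hb
    rw [Finset.mem_val] at hc
    obtain ⟨hcyc, hagree⟩ := Equiv.Perm.mem_cycleFactorsFinset_iff.mp hc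
    obtain ⟨a, ha, -⟩ := hcyc
    have haS : a ∈ c.support := Equiv.Perm.mem_support.mpr ha
    have hceq : c = f.cycleOf a := Equiv.Perm.cycle_is_cycleOf haS hc
    have hfa : f a ≠ a := hmove a
    have hset : (↑(f.cycleOf a).support : Set α) = Set.range fun n : ℤ => (f ^ n) a := by
      ext b
      rw [Finset.mem_coe, Equiv.Perm.mem_support_cycleOf_iff' hfa]
      exact Iff.rfl
    show (Finset.card ∘ Equiv.Perm.support) c = q
    have : (Finset.card ∘ Equiv.Perm.support) c = ((↑(f.cycleOf a).support : Set α)).ncard := by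
      rw [hceq]
      exact (Set.ncard_coe_finset _).symm
    rw [this, hset]
    exact horb a
  refine ⟨f.cycleType.card, Multiset.eq_replicate_card.mpr hent, ?_⟩
  have hsum := Equiv.Perm.sum_cycleType f
  rw [Multiset.eq_replicate_card.mpr hent] at hsum
  rw [Multiset.sum_replicate, smul_eq_mul] at hsum
  have hsupp : f.support = Finset.univ := by
    apply Finset.eq_univ_iff_forall.mpr
    intro a
    exact Equiv.Perm.mem_support.mpr (hmove a)
  rw [hsupp, Finset.card_univ] at hsum
  exact hsum

lemma exists_conj {B : Set ℕ} (hB : B.Finite) {q : ℕ} (hq : 0 < q) {x x' : Perm ℕ}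
    (hxB : Inv2 B x) (hx'B : Inv2 B x')
    (hmx : ∀ ω ∈ B, x ω ≠ ω) (hmx' : ∀ ω ∈ B, x' ω ≠ ω)
    (hox : ∀ ω ∈ B, (Set.range fun n : ℤ => (x ^ n) ω).ncard = q)
    (hox' : ∀ ω ∈ B, (Set.range fun n : ℤ => (x' ^ n) ω).ncard = q) :
    ∃ g : Perm ℕ, (∀ ω ∉ B, g ω = ω) ∧ ∀ ω ∈ B, g (x' ω) = x (g ω) := by
  classical
  haveI := hB.to_subtype
  haveI : Fintype B := Fintype.ofFinite _
  set σ := x'.subtypePerm (fun ω => (hx'B ω).symm) with hσ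
  set τ := x.subtypePerm (fun ω => (hxB ω).symm) with hτ
  have horbt : ∀ (y : Perm ℕ) (hy : Inv2 B y),
      (∀ ω ∈ B, (Set.range fun n : ℤ => (y ^ n) ω).ncard = q) →
      ∀ a : B, (Set.range fun n : ℤ => ((y.subtypePerm (fun ω => (hy ω).symm)) ^ n) a).ncard = q := by
    intro y hy h a
    have himg : Subtype.val '' (Set.range fun n : ℤ => ((y.subtypePerm (fun ω => (hy ω).symm)) ^ n) a)
        = Set.range fun n : ℤ => (y ^ n) (a : ℕ) := by
      ext b
      simp only [Set.mem_image, Set.mem_range]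
      constructor
      · rintro ⟨c, ⟨n, rfl⟩, rfl⟩
        exact ⟨n, by rw [Equiv.Perm.subtypePerm_zpow]; rfl⟩
      · rintro ⟨n, rfl⟩
        exact ⟨(y.subtypePerm (fun ω => (hy ω).symm) ^ n) a, ⟨n, rfl⟩, by rw [Equiv.Perm.subtypePerm_zpow]; rfl⟩
    have h2 := Set.ncard_image_of_injective
      (Set.range fun n : ℤ => ((y.subtypePerm (fun ω => (hy ω).symm)) ^ n) a) Subtype.val_injective
    rw [himg] at h2
    rw [← h2]
    exact h (a : ℕ) a.2
  obtain ⟨k1, hrep1, hcard1⟩ := cycleType_rep (f := σ)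
    (fun a h => hmx' a a.2 (congrArg Subtype.val h)) (horbt x' hx'B hox')
  obtain ⟨k2, hrep2, hcard2⟩ := cycleType_rep (f := τ)
    (fun a h => hmx a a.2 (congrArg Subtype.val h)) (horbt x hxB hox)
  have hk : k1 = k2 := Nat.eq_of_mul_eq_mul_right hq (hcard1.trans hcard2.symm)
  have hconj : IsConj σ τ := by
    rw [Equiv.Perm.isConj_iff_cycleType_eq, hrep1, hrep2, hk]
  obtain ⟨c, hc⟩ := isConj_iff.mp hconj
  refine ⟨Equiv.Perm.ofSubtype c, fun ω hω => Equiv.Perm.ofSubtype_apply_of_not_mem c hω, ?_⟩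
  intro ω hω
  have hx'ω : x' ω ∈ B := (hx'B ω).mp hω
  rw [Equiv.Perm.ofSubtype_apply_of_mem c hx'ω, Equiv.Perm.ofSubtype_apply_of_mem c hω]
  have h1 : (⟨x' ω, hx'ω⟩ : B) = σ ⟨ω, hω⟩ := by
    apply Subtype.ext
    rw [hσ, Equiv.Perm.subtypePerm_apply]
  rw [h1]
  have h2 : c (σ ⟨ω, hω⟩) = τ (c ⟨ω, hω⟩) := by
    have := congrArg (fun f : Perm B => f (c ⟨ω, hω⟩)) hc
    simp only [Equiv.Perm.mul_apply, Equiv.Perm.inv_apply_self] at this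
    exact this
  rw [h2, hτ, Equiv.Perm.subtypePerm_apply]

lemma exists_isSylowOf (p : ℕ) (H : Subgroup (Perm ℕ)) :
    ∃ Q : Subgroup (Perm ℕ), IsSylowOf p Q H := by
  obtain ⟨Q₀⟩ := (inferInstance : Nonempty (Sylow p ↥H))
  refine ⟨(Q₀ : Subgroup ↥H).map H.subtype, Subgroup.map_subtype_le _, ?_, ?_⟩
  · exact Q₀.isPGroup'.map H.subtype
  · intro R hRH hRp hQR
    have hmap : (R.subgroupOf H).map H.subtype = R := by
      rw [Subgroup.subgroupOf_map_subtype, inf_eq_left.mpr hRH]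
    have hRp' : IsPGroup p (R.subgroupOf H) :=
      hRp.of_equiv (Subgroup.subgroupOfEquivOfLe hRH).symm
    have hQ0le : (Q₀ : Subgroup ↥H) ≤ R.subgroupOf H :=
      Subgroup.map_le_iff_le_comap.mp hQR
    have hmax := Q₀.is_maximal' hRp' hQ0le
    rw [← hmap, hmax]

/-- The orbit of a point under a subgroup of `Perm ℕ`. -/
def orb (H : Subgroup (Perm ℕ)) (a : ℕ) : Set ℕ := {b | ∃ h ∈ H, h a = b}

lemma mem_orb_self {H : Subgroup (Perm ℕ)} {a : ℕ} : a ∈ orb H a := ⟨1, H.one_mem, rfl⟩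

lemma orb_eq_of_mem {H : Subgroup (Perm ℕ)} {a b : ℕ} (hb : b ∈ orb H a) :
    orb H b = orb H a := by
  obtain ⟨h₀, hh₀, rfl⟩ := hb
  ext c
  constructor
  · rintro ⟨h, hh, rfl⟩
    exact ⟨h * h₀, H.mul_mem hh hh₀, rfl⟩
  · rintro ⟨h, hh, rfl⟩
    refine ⟨h * h₀⁻¹, H.mul_mem hh (H.inv_mem hh₀), ?_⟩
    show h (h₀⁻¹ (h₀ a)) = h a
    rw [Equiv.Perm.inv_apply_self]

lemma orb_inv2 {H : Subgroup (Perm ℕ)} {h : Perm ℕ} (hh : h ∈ H) (a : ℕ) :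
    Inv2 (orb H a) h := by
  intro ω
  constructor
  · rintro ⟨g, hg, rfl⟩
    exact ⟨h * g, H.mul_mem hh hg, rfl⟩
  · rintro ⟨g, hg, hgω⟩
    refine ⟨h⁻¹ * g, H.mul_mem (H.inv_mem hh) hg, ?_⟩
    show h⁻¹ (g a) = ω
    rw [hgω, Equiv.Perm.inv_apply_self]

lemma orb_subset {H : Subgroup (Perm ℕ)} {α : Set ℕ} (hH : H ≤ symOn α) {a : ℕ}
    (ha : a ∈ α) : orb H a ⊆ α := by
  rintro b ⟨h, hh, rfl⟩
  exact symOn_maps (hH hh) ha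

lemma perm_mem_image {u : Perm ℕ} {S : Set ℕ} {b : ℕ} : b ∈ u '' S ↔ u⁻¹ b ∈ S := by
  constructor
  · rintro ⟨a, ha, rfl⟩
    rwa [Equiv.Perm.inv_apply_self]
  · intro h
    exact ⟨u⁻¹ b, h, Equiv.Perm.apply_inv_self u b⟩

lemma perm_image_inv2 {u : Perm ℕ} {S : Set ℕ} : Inv2 S u ↔ u '' S = S := by
  constructor
  · intro h
    ext b
    rw [perm_mem_image]
    have := h (u⁻¹ b)
    rwa [Equiv.Perm.apply_inv_self] at this
  · intro h ω
    constructor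
    · intro hω
      rw [← h]
      exact Set.mem_image_of_mem _ hω
    · intro hω
      rw [← h] at hω
      obtain ⟨a, ha, hau⟩ := hω
      rwa [← u.injective hau]

lemma image_eq_image_iff {u v : Perm ℕ} {S : Set ℕ} :
    u '' S = v '' S ↔ (v⁻¹ * u) '' S = S := by
  constructor
  · intro h
    ext b
    rw [perm_mem_image]
    have h1 : ((v⁻¹ * u)⁻¹ : Perm ℕ) b = u⁻¹ (v b) := by
      rw [mul_inv_rev, inv_inv, Equiv.Perm.mul_apply]
    rw [h1, ← perm_mem_image (u := u), h, perm_mem_image, Equiv.Perm.inv_apply_self]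
  · intro h
    ext b
    rw [perm_mem_image, perm_mem_image]
    have h2 := perm_image_inv2.mpr h
    have h3 := h2 (u⁻¹ b)
    rw [Equiv.Perm.mul_apply, Equiv.Perm.apply_inv_self] at h3
    exact h3

lemma not_mem_psupp {x : Perm ℕ} {ω : ℕ} : ω ∉ psupp x ↔ x ω = ω := by
  simp [psupp]

lemma ssupp_eq_of {X : Set (Perm ℕ)} {S : Set ℕ} (hne : X.Nonempty)
    (h : ∀ x ∈ X, psupp x = S) : ssupp X = S := by
  ext ω
  simp only [ssupp, Set.mem_iUnion]
  constructor
  · rintro ⟨x, hx, hω⟩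
    rwa [h x hx] at hω
  · intro hω
    exact ⟨hne.some, hne.some_mem, by rwa [h _ hne.some_mem]⟩

end Aux

/-- Let `X ∈ 𝓢^q` be closed, exact and irreducible. Then, up to equivalence,
`X = Δ^{p^i} Y` for some `i ≥ 0` and some transitive set `Y ∈ 𝓢^q`. -/
theorem stmt_16 (p q : ℕ) (hp : p.Prime) (hq : 2 ≤ q)
    (X : Set (Equiv.Perm ℕ)) (hX : memS q X)
    (hclosed : IsClosedSet p X) (hexact : IsExactSet p X) (hirr : IsIrred X) :
    ∃ (i : ℕ) (Y D : Set (Equiv.Perm ℕ)),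
      memS q Y ∧ TransitiveSet Y ∧ IsDelta (p ^ i) Y D ∧ EquivSet X D := by
  classical
  obtain ⟨⟨hXfin, hXne, hXne1, hXfs⟩, hXsupp, hXq⟩ := hX
  have hq0 : 0 < q := by omega
  set Ω := ssupp X with hΩdef
  have hΩfin : Ω.Finite := Set.Finite.biUnion hXfin fun x hx => hXfs x hx
  obtain ⟨x₀, hx₀⟩ := hXne
  have hΩne : Ω.Nonempty := by
    rcases Set.eq_empty_or_nonempty Ω with h | h
    · exfalso
      apply hXne1
      apply Set.eq_singleton_iff_nonempty_unique_mem.mpr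
      refine ⟨⟨x₀, hx₀⟩, fun x hx => ?_⟩
      have : psupp x = ∅ := by rw [hXsupp x hx]; exact h
      exact psupp_empty_iff.mp this
    · exact h
  obtain ⟨a₀, ha₀⟩ := hΩne
  have hmove : ∀ x ∈ X, ∀ ω ∈ Ω, x ω ≠ ω := by
    intro x hx ω hω
    rw [← hXsupp x hx] at hω
    exact hω
  have hXsym : ∀ x ∈ X, x ∈ symOn Ω := by
    intro x hx ω hω
    rw [← hXsupp x hx] at hω
    exact not_mem_psupp.mp hω
  have hΩinv : ∀ x ∈ X, Inv2 Ω x := by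
    intro x hx ω
    constructor
    · exact fun h => symOn_maps (hXsym x hx) h
    · intro h
      by_contra hω
      rw [mem_symOn.mp (hXsym x hx) ω hω] at h
      exact hω h
  -- the Sylow subgroup
  obtain ⟨Q, hQ⟩ := exists_isSylowOf p (SX X)
  have hQsym : ∀ u ∈ Q, u ∈ symOn Ω := fun u hu => (Subgroup.mem_inf.mp (hQ.1 hu)).1
  have hQcommX : ∀ u ∈ Q, ∀ x ∈ X, x * u = u * x := by
    intro u hu x hx
    exact Subgroup.mem_centralizer_iff.mp (Subgroup.mem_inf.mp (hQ.1 hu)).2 x hx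
  have hQpt : ∀ u ∈ Q, ∀ x ∈ X, ∀ ω, u (x ω) = x (u ω) := by
    intro u hu x hx ω
    have := congrArg (fun f : Perm ℕ => f ω) (hQcommX u hu x hx)
    exact (this : x (u ω) = u (x ω)).symm
  have hEQ := hclosed Q hQ
  -- subgroups H and K
  set H := Subgroup.closure X with hHdef
  set K := Subgroup.closure (X ∪ (Q : Set (Perm ℕ))) with hKdef
  have hHsym : H ≤ symOn Ω := (Subgroup.closure_le _).mpr hXsym
  have hKsym : K ≤ symOn Ω := (Subgroup.closure_le _).mpr
    (Set.union_subset hXsym fun u hu => hQsym u hu)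
  have hQK : ∀ u ∈ Q, u ∈ K := fun u hu =>
    Subgroup.subset_closure (Set.mem_union_right _ hu)
  have hXK : ∀ x ∈ X, x ∈ K := fun x hx =>
    Subgroup.subset_closure (Set.mem_union_left _ hx)
  have hXH : ∀ x ∈ X, x ∈ H := fun x hx => Subgroup.subset_closure hx
  have hQcommH : ∀ u ∈ Q, ∀ h ∈ H, u * h = h * u := by
    intro u hu h hh
    have hle : H ≤ Subgroup.centralizer {u} := by
      rw [hHdef]
      apply (Subgroup.closure_le _).mpr
      intro x hx
      have := hQcommX u hu x hx
      intro g hg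
      rw [Set.mem_singleton_iff] at hg
      subst hg
      exact this.symm
    exact Subgroup.mem_centralizer_iff.mp (hle hh) u rfl
  have hQHpt : ∀ u ∈ Q, ∀ h ∈ H, ∀ ω, u (h ω) = h (u ω) := by
    intro u hu h hh ω
    have := congrArg (fun f : Perm ℕ => f ω) (hQcommH u hu h hh)
    exact (this : u (h ω) = h (u ω))
  have hKdec : ∀ k ∈ K, ∃ u ∈ Q, ∃ h ∈ H, k = u * h := by
    intro k hk
    let T : Subgroup (Perm ℕ) :=
      { carrier := {k | ∃ u ∈ Q, ∃ h ∈ H, k = u * h}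
        one_mem' := ⟨1, Q.one_mem, 1, H.one_mem, (one_mul 1).symm⟩
        mul_mem' := by
          rintro a b ⟨u, hu, h, hh, rfl⟩ ⟨u', hu', h', hh', rfl⟩
          refine ⟨u * u', Q.mul_mem hu hu', h * h', H.mul_mem hh hh', ?_⟩
          have : h * u' = u' * h := (hQcommH u' hu' h hh).symm
          rw [mul_assoc, ← mul_assoc h u' h', this, mul_assoc, ← mul_assoc]
        inv_mem' := by
          rintro a ⟨u, hu, h, hh, rfl⟩
          refine ⟨u⁻¹, Q.inv_mem hu, h⁻¹, H.inv_mem hh, ?_⟩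
          rw [mul_inv_rev]
          exact (hQcommH u⁻¹ (Q.inv_mem hu) h⁻¹ (H.inv_mem hh)).symm }
    have hle : K ≤ T := by
      rw [hKdef]
      apply (Subgroup.closure_le _).mpr
      rintro x (hx | hx)
      · exact ⟨1, Q.one_mem, x, hXH x hx, (one_mul x).symm⟩
      · exact ⟨x, hx, 1, H.one_mem, (mul_one x).symm⟩
    exact hle hk
  -- K acts transitively on Ω
  have htrans : ∀ b ∈ Ω, b ∈ orb K a₀ := by
    by_contra hcon
    push_neg at hcon
    obtain ⟨b, hbΩ, hbA⟩ := hcon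
    set A := orb K a₀ with hAdef
    set B := Ω \ A with hBdef
    have hAsub : A ⊆ Ω := orb_subset hKsym ha₀
    have hbB : b ∈ B := ⟨hbΩ, hbA⟩
    have hKinv2 : ∀ k ∈ K, Inv2 A k := fun k hk => orb_inv2 hk a₀
    have hXinvA : ∀ x ∈ X, Inv2 A x := fun x hx => hKinv2 x (hXK x hx)
    have hXinvB : ∀ x ∈ X, Inv2 B x := by
      intro x hx ω
      constructor
      · rintro ⟨hω1, hω2⟩
        exact ⟨(hΩinv x hx ω).mp hω1, fun h => hω2 ((hXinvA x hx ω).mpr h)⟩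
      · rintro ⟨hω1, hω2⟩
        exact ⟨(hΩinv x hx ω).mpr hω1, fun h => hω2 ((hXinvA x hx ω).mp h)⟩
    have hQinvA : ∀ u ∈ Q, Inv2 A u := fun u hu => hKinv2 u (hQK u hu)
    set Y := restr A '' X with hYdef
    set Z := restr B '' X with hZdef
    have hpsY : ∀ x ∈ X, psupp (restr A x) = A := fun x hx =>
      psupp_restr (hXinvA x hx) fun ω hω => hmove x hx ω (hAsub hω)
    have hpsZ : ∀ x ∈ X, psupp (restr B x) = B := fun x hx =>
      psupp_restr (hXinvB x hx) fun ω hω => hmove x hx ω hω.1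
    have hssY : ssupp Y = A := by
      apply ssupp_eq_of ⟨restr A x₀, Set.mem_image_of_mem _ hx₀⟩
      rintro y ⟨x, hx, rfl⟩
      exact hpsY x hx
    have hssZ : ssupp Z = B := by
      apply ssupp_eq_of ⟨restr B x₀, Set.mem_image_of_mem _ hx₀⟩
      rintro y ⟨x, hx, rfl⟩
      exact hpsZ x hx
    have hmemFY : memF Y := by
      refine ⟨hXfin.image _, ⟨restr A x₀, Set.mem_image_of_mem _ hx₀⟩, ?_, ?_⟩
      · intro hY1
        have h1 : restr A x₀ ∈ Y := Set.mem_image_of_mem _ hx₀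
        rw [hY1, Set.mem_singleton_iff] at h1
        have h2 := congrArg (fun f : Perm ℕ => f a₀) h1
        simp only [Equiv.Perm.one_apply] at h2
        rw [restr_apply_of_mem (hXinvA x₀ hx₀) mem_orb_self] at h2
        exact hmove x₀ hx₀ a₀ ha₀ h2
      · rintro y ⟨x, hx, rfl⟩
        rw [hpsY x hx]
        exact hΩfin.subset hAsub
    have hmemFZ : memF Z := by
      refine ⟨hXfin.image _, ⟨restr B x₀, Set.mem_image_of_mem _ hx₀⟩, ?_, ?_⟩
      · intro hZ1
        have h1 : restr B x₀ ∈ Z := Set.mem_image_of_mem _ hx₀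
        rw [hZ1, Set.mem_singleton_iff] at h1
        have h2 := congrArg (fun f : Perm ℕ => f b) h1
        simp only [Equiv.Perm.one_apply] at h2
        rw [restr_apply_of_mem (hXinvB x₀ hx₀) hbB] at h2
        exact hmove x₀ hx₀ b hbΩ h2
      · rintro y ⟨x, hx, rfl⟩
        rw [hpsZ x hx]
        exact hΩfin.subset fun ω hω => hω.1
    have hdisjYZ : Disjoint (ssupp Y) (ssupp Z) := by
      rw [hssY, hssZ]
      exact Set.disjoint_sdiff_right
    have hsplit : ∀ x ∈ X, restr A x * restr B x = x := by
      intro x hx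
      apply Equiv.ext
      intro ω
      show restr A x (restr B x ω) = x ω
      by_cases hωA : ω ∈ A
      · rw [restr_apply_of_not_mem (fun h : ω ∈ B => h.2 hωA),
          restr_apply_of_mem (hXinvA x hx) hωA]
      · by_cases hωΩ : ω ∈ Ω
        · have hωB : ω ∈ B := ⟨hωΩ, hωA⟩
          rw [restr_apply_of_mem (hXinvB x hx) hωB]
          have hxB : x ω ∈ B := (hXinvB x hx ω).mp hωB
          rw [restr_apply_of_not_mem (fun h : x ω ∈ A => hxB.2 h)]
        · rw [restr_apply_of_not_mem (fun h : ω ∈ B => hωΩ h.1),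
            restr_apply_of_not_mem (fun h : ω ∈ A => hωA h),
            mem_symOn.mp (hXsym x hx) ω hωΩ]
    -- each restricted factor commutes with every element of Q
    have hcomm : ∀ (S : Set ℕ), (∀ u ∈ Q, Inv2 S u) → ∀ x ∈ X, (∀ ω, ω ∈ S ↔ x ω ∈ S) →
        ∀ u ∈ Q, u * restr S x = restr S x * u := by
      intro S hSinv x hx hSx u hu
      apply Equiv.ext
      intro ω
      show u (restr S x ω) = restr S x (u ω)
      by_cases hω : ω ∈ S
      · rw [restr_apply_of_mem hSx hω, restr_apply_of_mem hSx ((hSinv u hu ω).mp hω),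
          hQpt u hu x hx ω]
      · rw [restr_apply_of_not_mem hω,
          restr_apply_of_not_mem (fun h => hω ((hSinv u hu ω).mpr h))]
    have hQinvB : ∀ u ∈ Q, Inv2 B u := by
      intro u hu
      have hQinvΩ : Inv2 Ω u := by
        intro ω
        constructor
        · exact fun h => symOn_maps (hQsym u hu) h
        · intro h
          by_contra hω
          rw [mem_symOn.mp (hQsym u hu) ω hω] at h
          exact hω h
      intro ω
      constructor
      · rintro ⟨hω1, hω2⟩
        exact ⟨(hQinvΩ ω).mp hω1, fun h => hω2 ((hQinvA u hu ω).mpr h)⟩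
      · rintro ⟨hω1, hω2⟩
        exact ⟨(hQinvΩ ω).mpr hω1, fun h => hω2 ((hQinvA u hu ω).mp h)⟩
    have hXYZ : X = Y * Z := by
      ext w
      constructor
      · intro hw
        rw [← hsplit w hw]
        exact Set.mul_mem_mul (Set.mem_image_of_mem _ hw) (Set.mem_image_of_mem _ hw)
      · intro hw
        rw [Set.mem_mul] at hw
        obtain ⟨y, hy, z, hz, rfl⟩ := hw
        obtain ⟨x1, hx1, rfl⟩ := hy
        obtain ⟨x2, hx2, rfl⟩ := hz
        rw [← hEQ]
        refine Set.mem_inter ?_ ?_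
        · apply SetLike.mem_coe.mpr
          apply Subgroup.mem_centralizer_iff.mpr
          intro u hu
          have h1 := hcomm A hQinvA x1 hx1 (hXinvA x1 hx1) u hu
          have h2 := hcomm B hQinvB x2 hx2 (hXinvB x2 hx2) u hu
          rw [← mul_assoc, h1, mul_assoc, h2, ← mul_assoc]
        · -- membership in Ξ_X
          obtain ⟨g, hg1, hg2⟩ := exists_conj (hΩfin.subset fun ω hω => hω.1) hq0
            (hXinvB x1 hx1) (hXinvB x2 hx2)
            (fun ω hω => hmove x1 hx1 ω hω.1) (fun ω hω => hmove x2 hx2 ω hω.1)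
            (fun ω hω => hXq x1 hx1 ω (by rw [hXsupp x1 hx1]; exact hω.1))
            (fun ω hω => hXq x2 hx2 ω (by rw [hXsupp x2 hx2]; exact hω.1))
          have hgB : g ∈ symOn B := hg1
          have hgΩ : g ∈ symOn Ω := fun ω hω => hg1 ω fun h => hω h.1
          have heq : conjR g x1 = restr A x1 * restr B x2 := by
            apply Equiv.ext
            intro ω
            show g⁻¹ (x1 (g ω)) = restr A x1 (restr B x2 ω)
            by_cases hωB : ω ∈ B
            · have hgω : g ω ∈ B := symOn_maps hgB hωB
              have hx2ω : x2 ω ∈ B := (hXinvB x2 hx2 ω).mp hωB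
              rw [restr_apply_of_mem (hXinvB x2 hx2) hωB,
                restr_apply_of_not_mem (fun h : x2 ω ∈ A => hx2ω.2 h)]
              have := congrArg (fun c => g⁻¹ c) (hg2 ω hωB)
              simp only [Equiv.Perm.inv_apply_self] at this
              exact this.symm
            · have hgfix : g ω = ω := hg1 ω hωB
              rw [restr_apply_of_not_mem hωB, hgfix]
              have hginv : g⁻¹ ∈ symOn B := (symOn B).inv_mem hgB
              by_cases hωA : ω ∈ A
              · have hx1ω : x1 ω ∈ A := (hXinvA x1 hx1 ω).mp hωA
                rw [restr_apply_of_mem (hXinvA x1 hx1) hωA]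
                exact mem_symOn.mp hginv (x1 ω) fun h : x1 ω ∈ B => h.2 hx1ω
              · have hωΩ : ω ∉ Ω := fun h => hωB ⟨h, hωA⟩
                rw [restr_apply_of_not_mem hωA, mem_symOn.mp (hXsym x1 hx1) ω hωΩ]
                exact mem_symOn.mp hginv ω hωB
          simp only [Xi, Set.mem_iUnion]
          exact ⟨g, hgΩ, x1, hx1, heq⟩
    exact hirr.2 Y Z hmemFY hmemFZ hdisjYZ hXYZ
  -- the stabilizer and quotient
  have hsymfin : Finite (symOn Ω : Set (Perm ℕ)) := symOn_finite hΩfin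
  have hQsetfin : (Q : Set (Perm ℕ)).Finite := by
    have hsub : (Q : Set (Perm ℕ)) ⊆ (symOn Ω : Set (Perm ℕ)) := fun u hu => hQsym u hu
    have h1 : (symOn Ω : Set (Perm ℕ)).Finite := @Set.toFinite _ _ hsymfin
    exact h1.subset hsub
  haveI hQfinite : Finite ↥Q := hQsetfin.to_subtype
  set Ω₁ := orb H a₀ with hΩ₁def
  have hΩ₁sub : Ω₁ ⊆ Ω := orb_subset hHsym ha₀
  have ha₀Ω₁ : a₀ ∈ Ω₁ := mem_orb_self
  have hXinvΩ₁ : ∀ x ∈ X, Inv2 Ω₁ x := fun x hx => orb_inv2 (hXH x hx) a₀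
  set St : Subgroup ↥Q :=
    { carrier := {u : ↥Q | Inv2 Ω₁ (u : Perm ℕ)}
      one_mem' := fun ω => Iff.rfl
      mul_mem' := by
        intro a b ha hb
        show Inv2 Ω₁ ((a * b : ↥Q) : Perm ℕ)
        exact fun ω => (hb ω).trans (ha _)
      inv_mem' := by
        intro a ha
        show Inv2 Ω₁ ((a⁻¹ : ↥Q) : Perm ℕ)
        exact Inv2.inv ha } with hStdef
  haveI : Fact p.Prime := ⟨hp⟩
  obtain ⟨n, hn⟩ := IsPGroup.iff_card.mp hQ.2.1
  have hdvd : Nat.card (↥Q ⧸ St) ∣ p ^ n := hn ▸ Subgroup.card_quotient_dvd_card St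
  obtain ⟨i, hin, him⟩ := (Nat.dvd_prime_pow hp).mp hdvd
  haveI : Finite (↥Q ⧸ St) := Quotient.finite _
  have e : (↥Q ⧸ St) ≃ Fin (p ^ i) := Finite.equivFinOfCardEq him
  set uf : Fin (p ^ i) → ↥Q := fun j => (e.symm j).out with hufdef
  have hout : ∀ j, (QuotientGroup.mk (uf j) : ↥Q ⧸ St) = e.symm j := fun j =>
    QuotientGroup.out_eq' _
  have hcoset : ∀ uu vv : ↥Q, (QuotientGroup.mk uu : ↥Q ⧸ St) = QuotientGroup.mk vv ↔
      (uu : Perm ℕ) '' Ω₁ = (vv : Perm ℕ) '' Ω₁ := by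
    intro uu vv
    rw [QuotientGroup.eq]
    constructor
    · intro h
      have h2 : Inv2 Ω₁ ((uu : Perm ℕ)⁻¹ * (vv : Perm ℕ)) := h
      exact (image_eq_image_iff.mpr (perm_image_inv2.mp h2)).symm
    · intro h
      have h2 := image_eq_image_iff.mp h.symm
      show Inv2 Ω₁ ((uu : Perm ℕ)⁻¹ * (vv : Perm ℕ))
      exact perm_image_inv2.mpr h2
  have himgOrb : ∀ uu : ↥Q, (uu : Perm ℕ) '' Ω₁ = orb H ((uu : Perm ℕ) a₀) := by
    intro uu
    ext c
    constructor
    · rintro ⟨d, ⟨h, hh, rfl⟩, rfl⟩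
      exact ⟨h, hh, (hQHpt uu uu.2 h hh a₀).symm⟩
    · rintro ⟨h, hh, rfl⟩
      exact ⟨h a₀, ⟨h, hh, rfl⟩, hQHpt uu uu.2 h hh a₀⟩
  have hSj : ∀ j, (uf j : Perm ℕ) '' Ω₁ ⊆ Ω := by
    intro j
    rw [himgOrb]
    exact orb_subset hHsym (symOn_maps (hQsym _ (uf j).2) ha₀)
  have hSdisj : ∀ j j' : Fin (p ^ i), j ≠ j' →
      Disjoint ((uf j : Perm ℕ) '' Ω₁) ((uf j' : Perm ℕ) '' Ω₁) := by
    intro j j' hne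
    rw [Set.disjoint_left]
    intro c hc hc'
    apply hne
    have h1 : orb H ((uf j : Perm ℕ) a₀) = orb H ((uf j' : Perm ℕ) a₀) := by
      rw [himgOrb] at hc hc'
      rw [← orb_eq_of_mem hc, orb_eq_of_mem hc']
    have h2 : (uf j : Perm ℕ) '' Ω₁ = (uf j' : Perm ℕ) '' Ω₁ := by
      rw [himgOrb, himgOrb, h1]
    have h3 := (hcoset (uf j) (uf j')).mpr h2
    rw [hout, hout] at h3
    exact e.symm.injective h3
  have hcover : ∀ ω ∈ Ω, ∃ j, ω ∈ (uf j : Perm ℕ) '' Ω₁ := by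
    intro ω hω
    obtain ⟨k, hk, hkω⟩ := htrans ω hω
    obtain ⟨u, hu, h, hh, rfl⟩ := hKdec k hk
    refine ⟨e (QuotientGroup.mk ⟨u, hu⟩), ?_⟩
    have h2 : (uf (e (QuotientGroup.mk ⟨u, hu⟩)) : Perm ℕ) '' Ω₁ = u '' Ω₁ := by
      have h3 := hout (e (QuotientGroup.mk ⟨u, hu⟩))
      rw [Equiv.symm_apply_apply] at h3
      exact (hcoset _ ⟨u, hu⟩).mp h3
    rw [h2]
    exact ⟨h a₀, ⟨h, hh, rfl⟩, hkω⟩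
  set Y := restr Ω₁ '' X with hYdef
  have hpsY : ∀ x ∈ X, psupp (restr Ω₁ x) = Ω₁ := fun x hx =>
    psupp_restr (hXinvΩ₁ x hx) fun ω hω => hmove x hx ω (hΩ₁sub hω)
  have hssY : ssupp Y = Ω₁ := by
    apply ssupp_eq_of ⟨restr Ω₁ x₀, Set.mem_image_of_mem _ hx₀⟩
    rintro y ⟨x, hx, rfl⟩
    exact hpsY x hx
  have hmemFY : memF Y := by
    refine ⟨hXfin.image _, ⟨restr Ω₁ x₀, Set.mem_image_of_mem _ hx₀⟩, ?_, ?_⟩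
    · intro hY1
      have h1 : restr Ω₁ x₀ ∈ Y := Set.mem_image_of_mem _ hx₀
      rw [hY1, Set.mem_singleton_iff] at h1
      have h2 := congrArg (fun f : Perm ℕ => f a₀) h1
      simp only [Equiv.Perm.one_apply] at h2
      rw [restr_apply_of_mem (hXinvΩ₁ x₀ hx₀) ha₀Ω₁] at h2
      exact hmove x₀ hx₀ a₀ ha₀ h2
    · rintro y ⟨x, hx, rfl⟩
      rw [hpsY x hx]
      exact hΩfin.subset hΩ₁sub
  have hmemSY : memS q Y := by
    refine ⟨hmemFY, ?_, ?_⟩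
    · rintro y ⟨x, hx, rfl⟩
      rw [hpsY x hx, hssY]
    · rintro y ⟨x, hx, rfl⟩ ω hω
      rw [hpsY x hx] at hω
      have hrange : (Set.range fun n : ℤ => ((restr Ω₁ x) ^ n) ω)
          = Set.range fun n : ℤ => (x ^ n) ω := by
        ext c
        simp only [Set.mem_range]
        constructor
        · rintro ⟨n, rfl⟩
          exact ⟨n, (restr_zpow_apply (hXinvΩ₁ x hx) hω n).symm⟩
        · rintro ⟨n, rfl⟩
          exact ⟨n, restr_zpow_apply (hXinvΩ₁ x hx) hω n⟩
      rw [hrange]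
      exact hXq x hx ω (by rw [hXsupp x hx]; exact hΩ₁sub hω)
  have htransY : TransitiveSet Y := by
    set T : Subgroup (Perm ℕ) :=
      { carrier := {h | Inv2 Ω₁ h ∧ ∃ g ∈ Subgroup.closure Y, ∀ ω ∈ Ω₁, g ω = h ω}
        one_mem' := ⟨fun ω => Iff.rfl, 1, Subgroup.one_mem _, fun ω _ => rfl⟩
        mul_mem' := by
          rintro a b ⟨hai, ga, hga, hagree⟩ ⟨hbi, gb, hgb, hbgree⟩
          refine ⟨fun ω => (hbi ω).trans (hai _), ga * gb, Subgroup.mul_mem _ hga hgb, ?_⟩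
          intro ω hω
          show ga (gb ω) = a (b ω)
          rw [hbgree ω hω, hagree (b ω) ((hbi ω).mp hω)]
        inv_mem' := by
          rintro a ⟨hai, ga, hga, hagree⟩
          refine ⟨hai.inv, ga⁻¹, Subgroup.inv_mem _ hga, ?_⟩
          intro ω hω
          have h1 : a⁻¹ ω ∈ Ω₁ := (hai.inv ω).mp hω
          have h2 : ga (a⁻¹ ω) = ω := by rw [hagree _ h1, Equiv.Perm.apply_inv_self]
          have h3 := congrArg (fun c => ga⁻¹ c) h2
          simp only [Equiv.Perm.inv_apply_self] at h3
          exact h3.symm }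
    have hHT : H ≤ T := by
      rw [hHdef]
      apply (Subgroup.closure_le _).mpr
      intro x hx
      exact ⟨hXinvΩ₁ x hx, restr Ω₁ x,
        Subgroup.subset_closure (Set.mem_image_of_mem _ hx),
        fun ω hω => restr_apply_of_mem (hXinvΩ₁ x hx) hω⟩
    intro a ha b hb
    rw [hssY] at ha hb
    have hab : b ∈ orb H a := by
      rw [orb_eq_of_mem (show a ∈ orb H a₀ from ha)]
      exact hb
    obtain ⟨h, hh, rfl⟩ := hab
    obtain ⟨hi2, g, hg, hagree⟩ := hHT hh
    exact ⟨g, hg, hagree a ha⟩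
  set gf : Fin (p ^ i) → Perm ℕ := fun j => ((uf j : Perm ℕ))⁻¹ with hgfdef
  have haux : ∀ (g y : Perm ℕ) (ω : ℕ), conjR g y ω = g⁻¹ (y (g ω)) := fun _ _ _ => rfl
  have hpsconj : ∀ j, ∀ x ∈ X, psupp (conjR (gf j) (restr Ω₁ x)) = (uf j : Perm ℕ) '' Ω₁ := by
    intro j x hx
    rw [psupp_conjR, hpsY x hx]
    ext ω
    simp only [Set.mem_setOf_eq]
    rw [perm_mem_image]
  have hdiag : ∀ x ∈ X, (List.ofFn fun j => conjR (gf j) (restr Ω₁ x)).prod = x := by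
    intro x hx
    have hfix : ∀ (j) (ω' : ℕ), ω' ∉ (uf j : Perm ℕ) '' Ω₁ →
        (conjR (gf j) (restr Ω₁ x)) ω' = ω' := by
      intro j ω' hω'
      apply not_mem_psupp.mp
      rw [hpsconj j x hx]
      exact hω'
    apply Equiv.ext
    intro ω
    by_cases hω : ω ∈ Ω
    · obtain ⟨j₀, hj₀⟩ := hcover ω hω
      obtain ⟨l₁, l₂, hsplit2⟩ := List.append_of_mem (List.mem_finRange j₀)
      have hnd := List.nodup_finRange (p ^ i)
      rw [hsplit2] at hnd
      have hj₀l₁ : j₀ ∉ l₁ := fun hmem =>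
        (List.disjoint_of_nodup_append hnd) hmem List.mem_cons_self
      have hj₀l₂ : j₀ ∉ l₂ := by
        have h4 := (List.nodup_append.mp hnd).2.1
        exact (List.nodup_cons.mp h4).1
      set f : Fin (p ^ i) → Perm ℕ := fun j => conjR (gf j) (restr Ω₁ x) with hfdef
      have hof : (List.ofFn f) = List.map f l₁ ++ f j₀ :: List.map f l₂ := by
        rw [List.ofFn_eq_map, hsplit2, List.map_append, List.map_cons]
      show (List.ofFn f).prod ω = x ω
      rw [hof, List.prod_append, List.prod_cons]
      show (List.map f l₁).prod ((f j₀) ((List.map f l₂).prod ω)) = x ω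
      have h2 : (List.map f l₂).prod ω = ω := by
        apply prod_fix
        intro gg hgg
        rw [List.mem_map] at hgg
        obtain ⟨j, hj, rfl⟩ := hgg
        apply hfix
        intro hmem
        have hne : j ≠ j₀ := fun hh => hj₀l₂ (hh ▸ hj)
        exact (Set.disjoint_left.mp (hSdisj j j₀ hne)) hmem hj₀
      rw [h2]
      have h3 : f j₀ ω = x ω := by
        rw [hfdef]
        simp only
        rw [haux]
        have hu_inv : (gf j₀) ω ∈ Ω₁ := by
          rw [hgfdef]
          exact perm_mem_image.mp hj₀
        rw [restr_apply_of_mem (hXinvΩ₁ x hx) hu_inv]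
        rw [hgfdef]
        simp only [inv_inv]
        rw [hQpt _ (uf j₀).2 x hx, Equiv.Perm.apply_inv_self]
      rw [h3]
      apply prod_fix
      intro gg hgg
      rw [List.mem_map] at hgg
      obtain ⟨j, hj, rfl⟩ := hgg
      apply hfix
      intro hmem
      have hne : j ≠ j₀ := fun hh => hj₀l₁ (hh ▸ hj)
      have hxω : x ω ∈ (uf j₀ : Perm ℕ) '' Ω₁ := by
        rw [himgOrb] at hj₀ ⊢
        exact ((orb_inv2 (hXH x hx) _) ω).mp hj₀
      exact (Set.disjoint_left.mp (hSdisj j j₀ hne)) hmem hxω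
    · have h1 : (List.ofFn fun j => conjR (gf j) (restr Ω₁ x)).prod ω = ω := by
        apply prod_fix
        intro gg hgg
        rw [List.mem_ofFn] at hgg
        obtain ⟨j, rfl⟩ := hgg
        apply hfix
        intro hmem
        exact hω (hSj j hmem)
      rw [h1]
      exact (mem_symOn.mp (hXsym x hx) ω hω).symm
  refine ⟨i, Y, X, hmemSY, htransY, ⟨gf, ?_, ?_⟩, ⟨1, ?_⟩⟩
  · intro j j' hne
    have hj : ∀ j'' : Fin (p ^ i), ssupp (conjSet (gf j'') Y) = (uf j'' : Perm ℕ) '' Ω₁ := by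
      intro j''
      rw [ssupp_conjSet, hssY]
      ext ω
      simp only [Set.mem_setOf_eq]
      rw [perm_mem_image]
    rw [hj j, hj j']
    exact hSdisj j j' hne
  · ext w
    constructor
    · intro hw
      exact ⟨restr Ω₁ w, Set.mem_image_of_mem _ hw, hdiag w hw⟩
    · rintro ⟨y, ⟨x, hx, rfl⟩, rfl⟩
      simp only
      rw [hdiag x hx]
      exact hx
  · ext w
    simp only [conjSet, conjR, Set.mem_image]
    constructor
    · rintro ⟨x, hx, rfl⟩
      simpa using hx
    · intro hw
      exact ⟨w, hw, by simp⟩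

end FPS
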